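/- Assume s_{ij}(ω) ≥ 0 for all ω ∈ Ω and all i, j. Then the following two conditions are equivalent: (a) there exist e* ∈ X⁺⁺ with ‖e*‖ = 1 and a measurable function κ* : Ω → [1, ∞) with ω ↦ ln⁺ln κ*(ω) in L₁(Ω, 𝔉, ℙ) such that for every ω ∈ Ω and every u* ∈ X⁺ ∖ {0} there exists β*(ω,u*) > 0 with β*(ω,u*)·e* ≤ S(θ⁻¹ω)ᵀ u* ≤ κ*(ω)β*(ω,u*)·e* componentwise; (b) s_{ij}(ω) > 0 for all ω, i, j, and for each i = 1,…,N the function ω ↦ ln⁺( ln M_{r,i}(ω) − ln m_{r,i}(ω) ) belongs to L₁(Ω, 𝔉, ℙ). -/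
import Mathlib


open MeasureTheory Matrix

/-- `ln⁺ x = max (ln x) 0` (with `Real.log 0 = 0`, so `ln⁺ 0 = 0`). -/
noncomputable def lnplus (x : ℝ) : ℝ := max (Real.log x) 0

/-- The Euclidean norm on `Fin N → ℝ`. -/
noncomputable def enorm' {N : ℕ} (u : Fin N → ℝ) : ℝ := Real.sqrt (∑ i, (u i) ^ 2)

lemma lnplus_nonneg (x : ℝ) : 0 ≤ lnplus x := le_max_right _ _

lemma lnplus_mono {x y : ℝ} (hx : 0 ≤ x) (hxy : x ≤ y) : lnplus x ≤ lnplus y := by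
  unfold lnplus
  rcases eq_or_lt_of_le hx with h | h
  · simp [← h, Real.log_zero]
  · exact max_le_max (Real.log_le_log h hxy) le_rfl

lemma lnplus_add_le {a c : ℝ} (ha : 0 ≤ a) (hc : 0 ≤ c) : lnplus (a + c) ≤ lnplus a + c := by
  by_cases h1 : a + c ≤ 1
  · have : Real.log (a + c) ≤ 0 := Real.log_nonpos (by linarith) h1
    have : lnplus (a + c) = 0 := max_eq_right this
    rw [this]
    have := lnplus_nonneg a; linarith
  · push_neg at h1
    have hac : lnplus (a + c) = Real.log (a + c) :=
      max_eq_left (Real.log_nonneg h1.le)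
    rw [hac]
    by_cases ha1 : a ≤ 1
    · have h2 : Real.log (a + c) ≤ Real.log (1 + c) :=
        Real.log_le_log (by linarith) (by linarith)
      have h3 : Real.log (1 + c) ≤ c := by
        have := Real.log_le_sub_one_of_pos (x := 1 + c) (by linarith); linarith
      have := lnplus_nonneg a; linarith
    · push_neg at ha1
      have h2 : a + c ≤ a * (1 + c) := by nlinarith
      have h3 : Real.log (a + c) ≤ Real.log (a * (1 + c)) :=
        Real.log_le_log (by linarith) h2
      have h4 : Real.log (a * (1 + c)) = Real.log a + Real.log (1 + c) :=
        Real.log_mul (by linarith) (by linarith)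
      have h5 : Real.log (1 + c) ≤ c := by
        have := Real.log_le_sub_one_of_pos (x := 1 + c) (by linarith); linarith
      have h6 : lnplus a = Real.log a := max_eq_left (Real.log_nonneg ha1.le)
      rw [h6]; linarith

lemma measurable_lnplus {α : Type*} [MeasurableSpace α] {f : α → ℝ} (hf : Measurable f) :
    Measurable fun x => lnplus (f x) := by
  unfold lnplus
  exact (Real.measurable_log.comp hf).max measurable_const

lemma mulVec_transpose_single {N : ℕ} (A : Matrix (Fin N) (Fin N) ℝ) (i j : Fin N) :
    A.transpose.mulVec (Pi.single i 1) j = A i j := by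
  simp [Matrix.mulVec, dotProduct, Matrix.transpose_apply, Pi.single_apply, mul_ite]

lemma mulVec_transpose_eq {N : ℕ} (A : Matrix (Fin N) (Fin N) ℝ) (u : Fin N → ℝ) (i : Fin N) :
    A.transpose.mulVec u i = ∑ j, A j i * u j := by
  simp [Matrix.mulVec, dotProduct, Matrix.transpose_apply]


/-- Characterization of the dual focusing condition (B3)* for a family of
nonnegative matrices (dual cocycle `S*(ω) = S(θ⁻¹ω)ᵀ`) in terms of row extremes. -/
theorem stmt_3 {N : ℕ} (hN : 2 ≤ N)
    {Ω : Type*} [MeasurableSpace Ω] (ℙ : Measure Ω) [IsProbabilityMeasure ℙ]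
    (θ : Equiv.Perm Ω) (hθmeas : Measurable θ) (hθinvmeas : Measurable θ.symm)
    (hθmp : MeasurePreserving θ ℙ ℙ) (hθerg : Ergodic (θ : Ω → Ω) ℙ)
    (S : Ω → Matrix (Fin N) (Fin N) ℝ)
    (hSmeas : ∀ i j, Measurable fun ω => S ω i j)
    (hSnonneg : ∀ ω i j, 0 ≤ S ω i j) :
    (∃ estar : Fin N → ℝ, (∀ i, 0 < estar i) ∧ enorm' estar = 1 ∧
      ∃ κstar : Ω → ℝ, Measurable κstar ∧ (∀ ω, 1 ≤ κstar ω) ∧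
        Integrable (fun ω => lnplus (Real.log (κstar ω))) ℙ ∧
        ∀ ω, ∀ ustar : Fin N → ℝ, (∀ i, 0 ≤ ustar i) → ustar ≠ 0 →
          ∃ βstar : ℝ, 0 < βstar ∧
            ∀ i, βstar * estar i ≤ (S (θ.symm ω)).transpose.mulVec ustar i ∧
              (S (θ.symm ω)).transpose.mulVec ustar i ≤ κstar ω * (βstar * estar i))
    ↔
    ((∀ ω i j, 0 < S ω i j) ∧
      ∀ i : Fin N, Integrable (fun ω =>
        lnplus (Real.log (⨆ j, S ω i j) - Real.log (⨅ j, S ω i j))) ℙ) := by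
  have hNpos : 0 < N := by omega
  haveI : Nonempty (Fin N) := ⟨⟨0, hNpos⟩⟩
  set e : Ω ≃ᵐ Ω := { toEquiv := θ, measurable_toFun := hθmeas,
                      measurable_invFun := hθinvmeas } with he
  have hmp' : MeasurePreserving (⇑e.symm) ℙ ℙ := MeasurePreserving.symm e hθmp
  have htransfer : ∀ g : Ω → ℝ, Integrable (g ∘ ⇑e.symm) ℙ ↔ Integrable g ℙ :=
    fun g => hmp'.integrable_comp_emb e.symm.measurableEmbedding
  -- basic sup/inf bounds
  have hle_sup : ∀ (f : Fin N → ℝ) (j : Fin N), f j ≤ ⨆ k, f k :=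
    fun f j => le_ciSup (Set.Finite.bddAbove (Set.finite_range f)) j
  have hinf_le : ∀ (f : Fin N → ℝ) (j : Fin N), (⨅ k, f k) ≤ f j :=
    fun f j => ciInf_le (Set.Finite.bddBelow (Set.finite_range f)) j
  constructor
  · rintro ⟨estar, hepos, -, κ, hκmeas, hκ1, hκint, hfoc⟩
    -- focusing bound with single vectors
    have hkey : ∀ ω i j, ∃ β : ℝ, 0 < β ∧
        β * estar j ≤ S ω i j ∧ S ω i j ≤ κ (θ ω) * (β * estar j) := by
      intro ω i j
      obtain ⟨β, hβ, h⟩ := hfoc (θ ω) (Pi.single i 1)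
        (fun k => by by_cases hk : k = i <;> simp [hk, Pi.single_apply])
        (by
          intro h0
          have := congrFun h0 i
          simp [Pi.single_apply] at this)
      have h1 := (h j).1
      have h2 := (h j).2
      rw [Equiv.symm_apply_apply, mulVec_transpose_single] at h1 h2
      exact ⟨β, hβ, h1, h2⟩
    have hpos : ∀ ω i j, 0 < S ω i j := by
      intro ω i j
      obtain ⟨β, hβ, h1, -⟩ := hkey ω i j
      exact lt_of_lt_of_le (mul_pos hβ (hepos j)) h1
    refine ⟨hpos, fun i => ?_⟩
    set emax := ⨆ k, estar k with hemax
    set emin := ⨅ k, estar k with hemin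
    have heminpos : 0 < emin := by
      obtain ⟨k0, hk0⟩ := Finite.exists_min estar
      exact lt_of_lt_of_le (hepos k0) (le_ciInf hk0)
    have hminmax : emin ≤ emax := le_trans (hinf_le estar ⟨0, hNpos⟩) (hle_sup estar ⟨0, hNpos⟩)
    set c : ℝ := Real.log emax - Real.log emin with hc
    have hcnn : 0 ≤ c := by
      have := Real.log_le_log heminpos hminmax
      simp [hc]; linarith
    set F : Ω → ℝ := fun ω' =>
      lnplus (Real.log (⨆ j, S ω' i j) - Real.log (⨅ j, S ω' i j)) with hF
    have hFmeas : Measurable F := by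
      apply measurable_lnplus
      exact ((Real.measurable_log.comp (Measurable.iSup fun j => hSmeas i j)).sub
        (Real.measurable_log.comp (Measurable.iInf fun j => hSmeas i j)))
    have : Integrable (F ∘ ⇑e.symm) ℙ := by
      apply Integrable.mono' (hκint.add (integrable_const c))
        ((hFmeas.comp e.symm.measurable).aestronglyMeasurable)
      filter_upwards with ω
      set ω' := e.symm ω with hω'
      obtain ⟨β, hβ, h⟩ := hfoc ω (Pi.single i 1)
        (fun k => by by_cases hk : k = i <;> simp [hk, Pi.single_apply])
        (by
          intro h0
          have := congrFun h0 i
          simp [Pi.single_apply] at this)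
      have h' : ∀ k, β * estar k ≤ S ω' i k ∧ S ω' i k ≤ κ ω * (β * estar k) := by
        intro k
        have h1 := (h k).1
        have h2 := (h k).2
        rw [mulVec_transpose_single] at h1 h2
        exact ⟨h1, h2⟩
      have hκω : (0:ℝ) < κ ω := lt_of_lt_of_le one_pos (hκ1 ω)
      have hmlb : β * emin ≤ ⨅ k, S ω' i k := by
        apply le_ciInf
        intro k
        exact le_trans (mul_le_mul_of_nonneg_left (hinf_le estar k) hβ.le) (h' k).1
      have hmub : (⨆ k, S ω' i k) ≤ κ ω * (β * emax) := by
        apply ciSup_le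
        intro k
        refine le_trans (h' k).2 ?_
        have : β * estar k ≤ β * emax := mul_le_mul_of_nonneg_left (hle_sup estar k) hβ.le
        nlinarith
      have hmpos : 0 < ⨅ k, S ω' i k := lt_of_lt_of_le (mul_pos hβ heminpos) hmlb
      have hMpos : 0 < ⨆ k, S ω' i k := lt_of_lt_of_le hmpos (le_trans (hinf_le _ ⟨0, hNpos⟩) (hle_sup _ ⟨0, hNpos⟩))
      have hlogdiff_nn : 0 ≤ Real.log (⨆ k, S ω' i k) - Real.log (⨅ k, S ω' i k) := by
        have := Real.log_le_log hmpos (le_trans (hinf_le (fun k => S ω' i k) ⟨0, hNpos⟩) (hle_sup (fun k => S ω' i k) ⟨0, hNpos⟩))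
        linarith
      have hlogdiff : Real.log (⨆ k, S ω' i k) - Real.log (⨅ k, S ω' i k)
          ≤ Real.log (κ ω) + c := by
        have hub := Real.log_le_log hMpos hmub
        have hlb := Real.log_le_log (mul_pos hβ heminpos) hmlb
        have hemaxpos : 0 < emax := lt_of_lt_of_le heminpos hminmax
        rw [Real.log_mul hκω.ne' (mul_pos hβ hemaxpos).ne', Real.log_mul hβ.ne' hemaxpos.ne'] at hub
        rw [Real.log_mul hβ.ne' heminpos.ne'] at hlb
        simp only [hc]
        linarith
      have hκlognn : 0 ≤ Real.log (κ ω) := Real.log_nonneg (hκ1 ω)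
      have hbound : F ω' ≤ lnplus (Real.log (κ ω)) + c :=
        le_trans (lnplus_mono hlogdiff_nn hlogdiff)
          (lnplus_add_le hκlognn hcnn)
      have : ‖F (e.symm ω)‖ = F ω' := by rw [← hω', Real.norm_of_nonneg (lnplus_nonneg _)]
      simpa [Function.comp, this] using hbound
    exact (htransfer F).mp this
  · rintro ⟨hpos, hint⟩
    have hsqrtpos : (0:ℝ) < Real.sqrt N := Real.sqrt_pos.mpr (by exact_mod_cast hNpos)
    refine ⟨fun _ => (Real.sqrt N)⁻¹, fun i => inv_pos.mpr hsqrtpos, ?_, ?_⟩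
    · unfold enorm'
      have : ∀ i : Fin N, ((Real.sqrt N)⁻¹) ^ 2 = (N:ℝ)⁻¹ := by
        intro i
        rw [inv_pow, Real.sq_sqrt (Nat.cast_nonneg N)]
      rw [Finset.sum_congr rfl (fun i _ => this i), Finset.sum_const]
      simp only [Finset.card_univ, Fintype.card_fin, nsmul_eq_mul]
      rw [mul_inv_cancel₀ (by exact_mod_cast hNpos.ne')]
      exact Real.sqrt_one
    · -- define κ
      set m : Ω → Fin N → ℝ := fun ω' j => ⨅ k, S ω' j k with hm
      set M : Ω → Fin N → ℝ := fun ω' j => ⨆ k, S ω' j k with hM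
      have hmpos : ∀ ω' j, 0 < m ω' j := by
        intro ω' j
        obtain ⟨k0, hk0⟩ := Finite.exists_min (fun k => S ω' j k)
        exact lt_of_lt_of_le (hpos ω' j k0) (le_ciInf hk0)
      have hmM : ∀ ω' j, m ω' j ≤ M ω' j :=
        fun ω' j => le_trans (hinf_le _ ⟨0, hNpos⟩) (hle_sup _ ⟨0, hNpos⟩)
      set κ : Ω → ℝ := fun ω => ⨆ j, M (θ.symm ω) j / m (θ.symm ω) j with hκ
      have hratio1 : ∀ ω' j, 1 ≤ M ω' j / m ω' j := by
        intro ω' j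
        rw [le_div_iff₀ (hmpos ω' j)]
        simpa using hmM ω' j
      have hκ1 : ∀ ω, 1 ≤ κ ω :=
        fun ω => le_trans (hratio1 (θ.symm ω) ⟨0, hNpos⟩)
          (hle_sup (fun j => M (θ.symm ω) j / m (θ.symm ω) j) ⟨0, hNpos⟩)
      have hratio_le : ∀ ω j, M (θ.symm ω) j / m (θ.symm ω) j ≤ κ ω :=
        fun ω j => hle_sup (fun j => M (θ.symm ω) j / m (θ.symm ω) j) j
      have hmmeas : ∀ j, Measurable fun ω' => m ω' j :=
        fun j => Measurable.iInf fun k => hSmeas j k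
      have hMmeas : ∀ j, Measurable fun ω' => M ω' j :=
        fun j => Measurable.iSup fun k => hSmeas j k
      have hκmeas : Measurable κ := by
        apply Measurable.iSup
        intro j
        exact ((hMmeas j).comp hθinvmeas).div ((hmmeas j).comp hθinvmeas)
      refine ⟨κ, hκmeas, hκ1, ?_, ?_⟩
      · -- integrability
        set G : Ω → ℝ := fun ω' => ∑ j, lnplus (Real.log (M ω' j) - Real.log (m ω' j))
          with hG
        have hGint : Integrable (G ∘ ⇑e.symm) ℙ :=
          (htransfer G).mpr (integrable_finset_sum _ fun j _ => hint j)
        apply Integrable.mono' hGint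
          ((measurable_lnplus (Real.measurable_log.comp hκmeas)).aestronglyMeasurable)
        filter_upwards with ω
        rw [Real.norm_of_nonneg (lnplus_nonneg _)]
        obtain ⟨j0, hj0⟩ := Finite.exists_max (fun j => M (θ.symm ω) j / m (θ.symm ω) j)
        have hκeq : κ ω = M (θ.symm ω) j0 / m (θ.symm ω) j0 :=
          le_antisymm (ciSup_le hj0) (hratio_le ω j0)
        have hlogκ : Real.log (κ ω) = Real.log (M (θ.symm ω) j0) - Real.log (m (θ.symm ω) j0) := by
          rw [hκeq, Real.log_div (lt_of_lt_of_le (hmpos _ j0) (hmM _ j0)).ne' (hmpos _ j0).ne']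
        calc lnplus (Real.log (κ ω))
            = lnplus (Real.log (M (θ.symm ω) j0) - Real.log (m (θ.symm ω) j0)) := by rw [hlogκ]
          _ ≤ ∑ j, lnplus (Real.log (M (θ.symm ω) j) - Real.log (m (θ.symm ω) j)) :=
              Finset.single_le_sum
                (f := fun j => lnplus (Real.log (M (θ.symm ω) j) - Real.log (m (θ.symm ω) j)))
                (fun j _ => lnplus_nonneg _) (Finset.mem_univ j0)
          _ = (G ∘ ⇑e.symm) ω := rfl
      · -- focusing property
        intro ω u hu hune
        set ω' := θ.symm ω with hω'
        set σ : ℝ := ∑ j, m ω' j * u j with hσ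
        have hσpos : 0 < σ := by
          obtain ⟨j0, hj0⟩ := Function.ne_iff.mp hune
          have hu0 : 0 < u j0 := lt_of_le_of_ne (hu j0) (Ne.symm (by simpa using hj0))
          apply Finset.sum_pos' (fun j _ => mul_nonneg (hmpos ω' j).le (hu j))
          exact ⟨j0, Finset.mem_univ j0, mul_pos (hmpos ω' j0) hu0⟩
        refine ⟨Real.sqrt N * σ, mul_pos hsqrtpos hσpos, fun i => ?_⟩
        have hβe : Real.sqrt N * σ * (Real.sqrt N)⁻¹ = σ := by
          field_simp
        rw [mulVec_transpose_eq, hβe]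
        constructor
        · apply Finset.sum_le_sum
          intro j _
          exact mul_le_mul_of_nonneg_right (hinf_le (fun k => S ω' j k) i) (hu j)
        · rw [hσ, Finset.mul_sum]
          apply Finset.sum_le_sum
          intro j _
          rw [← mul_assoc]
          apply mul_le_mul_of_nonneg_right _ (hu j)
          have h1 : M ω' j ≤ κ ω * m ω' j := by
            have := hratio_le ω j
            rw [div_le_iff₀ (hmpos ω' j)] at this
            simpa [hω'] using this
          exact le_trans (hle_sup (fun k => S ω' j k) i) h1
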